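/- The group B_2(C_4) is isomorphic to Z, generated by β_1 = [1,2], with [1,1] = [0,1] = 2β_1, [1,3] = 0, [2,3] = -β_1, and [3,3] = [0,3] = -2β_1. -/

import Mathlib

open FreeAbelianGroup

/-- A multiset of characters generates the character group. -/
def Adm {A : Type} [AddCommGroup A] (s : Multiset A) : Prop :=
  AddSubgroup.closure {x | x ∈ s} = ⊤

/-- Admissible symbols: multisets of `n` characters generating `A`. -/
def Symb (A : Type) [AddCommGroup A] (n : ℕ) : Type :=
  {s : Multiset A // Multiset.card s = n ∧ Adm s}

/-- The blow-up relations (B₂). -/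
def blowupRels (A : Type) [AddCommGroup A] (n : ℕ) :
    Set (FreeAbelianGroup (Symb A n)) :=
  {x | ∃ (a b : A) (t : Multiset A)
      (h : Multiset.card (a ::ₘ b ::ₘ t) = n ∧ Adm (a ::ₘ b ::ₘ t))
      (h1 : Multiset.card (a ::ₘ (b - a) ::ₘ t) = n ∧ Adm (a ::ₘ (b - a) ::ₘ t))
      (h2 : Multiset.card ((a - b) ::ₘ b ::ₘ t) = n ∧ Adm ((a - b) ::ₘ b ::ₘ t)),
      a ≠ b ∧
      x = of (⟨a ::ₘ b ::ₘ t, h⟩ : Symb A n) - of ⟨a ::ₘ (b - a) ::ₘ t, h1⟩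
            - of ⟨(a - b) ::ₘ b ::ₘ t, h2⟩} ∪
  {x | ∃ (a : A) (t : Multiset A)
      (h : Multiset.card (a ::ₘ a ::ₘ t) = n ∧ Adm (a ::ₘ a ::ₘ t))
      (h0 : Multiset.card ((0 : A) ::ₘ a ::ₘ t) = n ∧ Adm ((0 : A) ::ₘ a ::ₘ t)),
      x = of (⟨a ::ₘ a ::ₘ t, h⟩ : Symb A n) - of ⟨(0 : A) ::ₘ a ::ₘ t, h0⟩}

/-- The group of equivariant birational types `𝓑ₙ(G)`, for `A = G^∨`. -/
def B (A : Type) [AddCommGroup A] (n : ℕ) : Type :=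
  FreeAbelianGroup (Symb A n) ⧸ AddSubgroup.closure (blowupRels A n)

instance (A : Type) [AddCommGroup A] (n : ℕ) : AddCommGroup (B A n) := by
  unfold B; infer_instance

/-- The class of a symbol in `𝓑ₙ(G)`. -/
def symb {A : Type} [AddCommGroup A] {n : ℕ} (s : Multiset A)
    (h : Multiset.card s = n ∧ Adm s) : B A n :=
  QuotientAddGroup.mk (of (⟨s, h⟩ : Symb A n))

lemma adm_of_unit {N : ℕ} [NeZero N] {s : Multiset (ZMod N)} {u : ZMod N}
    (hu : u ∈ s) (h : IsUnit u) : Adm s := by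
  rw [Adm, AddSubgroup.eq_top_iff']
  intro x
  have hu' : u ∈ AddSubgroup.closure {y | y ∈ s} := AddSubgroup.subset_closure hu
  obtain ⟨v, hv⟩ := h.exists_left_inv
  have hx : x = (x * v).val • u := by
    rw [nsmul_eq_mul, ZMod.natCast_val, ZMod.cast_id, mul_assoc, hv, mul_one]
  rw [hx]
  exact AddSubgroup.nsmul_mem _ hu' _

lemma admU {N : ℕ} [NeZero N] {s : Multiset (ZMod N)} {u v : ZMod N}
    (hu : u ∈ s) (huv : u * v = 1) : Adm s :=
  adm_of_unit hu ⟨⟨u, v, huv, by rw [mul_comm]; exact huv⟩, rfl⟩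

def c4_12 : B (ZMod 4) 2 :=
  symb {1, 2} ⟨by decide, admU (u := 1) (v := 1) (by decide) (by decide)⟩
def c4_11 : B (ZMod 4) 2 :=
  symb {1, 1} ⟨by decide, admU (u := 1) (v := 1) (by decide) (by decide)⟩
def c4_01 : B (ZMod 4) 2 :=
  symb {0, 1} ⟨by decide, admU (u := 1) (v := 1) (by decide) (by decide)⟩
def c4_13 : B (ZMod 4) 2 :=
  symb {1, 3} ⟨by decide, admU (u := 1) (v := 1) (by decide) (by decide)⟩
def c4_23 : B (ZMod 4) 2 :=
  symb {2, 3} ⟨by decide, admU (u := 3) (v := 3) (by decide) (by decide)⟩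
def c4_33 : B (ZMod 4) 2 :=
  symb {3, 3} ⟨by decide, admU (u := 3) (v := 3) (by decide) (by decide)⟩
def c4_03 : B (ZMod 4) 2 :=
  symb {0, 3} ⟨by decide, admU (u := 3) (v := 3) (by decide) (by decide)⟩

/-! A weight `w` on multisets of characters that is additive under blow-ups and satisfies
`w [a,a] = w [0,a]` induces a homomorphism `B₂(C₄) → ℤ`; the weight that records the claimed
coordinates (`w [1,2] = 1`, `w [1,1] = w [0,1] = 2`, …) is such a weight. Conversely, four
blow-up relations and the two relations `[a,a] = [0,a]` express every symbol as a multiple of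
`[1,2]`, so `n ↦ n • [1,2]` is inverse to the weight homomorphism. -/

section Adm

open Multiset

variable {A : Type} [AddCommGroup A]

theorem Adm.of_subset_closure {s s' : Multiset A} (hs : Adm s)
    (h : ∀ x ∈ s, x ∈ AddSubgroup.closure {y | y ∈ s'}) : Adm s' := by
  rw [Adm, eq_top_iff, ← hs, AddSubgroup.closure_le]
  exact h

theorem Multiset.mem_addSubgroupClosure_of_mem {x : A} {s : Multiset A} (hx : x ∈ s) :
    x ∈ AddSubgroup.closure {y | y ∈ s} :=
  AddSubgroup.subset_closure hx

theorem adm_cons_cons_sub_left {a b : A} {t : Multiset A} :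
    Adm (a ::ₘ (b - a) ::ₘ t) ↔ Adm (a ::ₘ b ::ₘ t) := by
  constructor <;> refine fun h => h.of_subset_closure ?_ <;> simp only [forall_mem_cons] <;>
    refine ⟨mem_addSubgroupClosure_of_mem (by simp), ?_,
      fun x hx => mem_addSubgroupClosure_of_mem (by simp [hx])⟩
  · exact sub_mem (mem_addSubgroupClosure_of_mem (by simp))
      (mem_addSubgroupClosure_of_mem (by simp))
  · simpa only [sub_add_cancel] using
      add_mem (mem_addSubgroupClosure_of_mem (mem_cons_of_mem (mem_cons_self (b - a) t)))
        (mem_addSubgroupClosure_of_mem (mem_cons_self a _))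

theorem adm_cons_sub_cons_right {a b : A} {t : Multiset A} :
    Adm ((a - b) ::ₘ b ::ₘ t) ↔ Adm (a ::ₘ b ::ₘ t) := by
  constructor <;> refine fun h => h.of_subset_closure ?_ <;> simp only [forall_mem_cons] <;>
    refine ⟨?_, mem_addSubgroupClosure_of_mem (by simp),
      fun x hx => mem_addSubgroupClosure_of_mem (by simp [hx])⟩
  · exact sub_mem (mem_addSubgroupClosure_of_mem (by simp))
      (mem_addSubgroupClosure_of_mem (by simp))
  · simpa only [sub_add_cancel] using
      add_mem (mem_addSubgroupClosure_of_mem (mem_cons_self (a - b) _))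
        (mem_addSubgroupClosure_of_mem (mem_cons_of_mem (mem_cons_self b t)))

theorem adm_zero_cons_iff {a : A} {t : Multiset A} :
    Adm (0 ::ₘ a ::ₘ t) ↔ Adm (a ::ₘ a ::ₘ t) := by
  constructor <;> refine fun h => h.of_subset_closure ?_ <;> simp only [forall_mem_cons] <;>
    refine ⟨?_, mem_addSubgroupClosure_of_mem (by simp),
      fun x hx => mem_addSubgroupClosure_of_mem (by simp [hx])⟩
  exacts [zero_mem _, mem_addSubgroupClosure_of_mem (by simp)]

end Adm

namespace B

variable {A : Type} [AddCommGroup A] {n : ℕ}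

def mk : FreeAbelianGroup (Symb A n) →+ B A n :=
  QuotientAddGroup.mk' _

theorem symb_eq_mk (s : Multiset A) (h : Multiset.card s = n ∧ Adm s) :
    symb s h = mk (of ⟨s, h⟩) :=
  rfl

theorem mk_eq_zero_of_mem {x : FreeAbelianGroup (Symb A n)} (hx : x ∈ blowupRels A n) :
    mk x = 0 :=
  (QuotientAddGroup.eq_zero_iff x).2 (AddSubgroup.subset_closure hx)

theorem symb_blowup {a b : A} {t : Multiset A} (hab : a ≠ b)
    (h : Multiset.card (a ::ₘ b ::ₘ t) = n ∧ Adm (a ::ₘ b ::ₘ t))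
    (h1 : Multiset.card (a ::ₘ (b - a) ::ₘ t) = n ∧ Adm (a ::ₘ (b - a) ::ₘ t))
    (h2 : Multiset.card ((a - b) ::ₘ b ::ₘ t) = n ∧ Adm ((a - b) ::ₘ b ::ₘ t)) :
    symb (a ::ₘ b ::ₘ t) h = symb (a ::ₘ (b - a) ::ₘ t) h1 + symb ((a - b) ::ₘ b ::ₘ t) h2 := by
  rw [← sub_eq_zero, ← sub_sub, symb_eq_mk, symb_eq_mk, symb_eq_mk, ← map_sub, ← map_sub]
  exact mk_eq_zero_of_mem (Or.inl ⟨a, b, t, h, h1, h2, hab, rfl⟩)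

theorem symb_cons_self {a : A} {t : Multiset A}
    (h : Multiset.card (a ::ₘ a ::ₘ t) = n ∧ Adm (a ::ₘ a ::ₘ t))
    (h0 : Multiset.card ((0 : A) ::ₘ a ::ₘ t) = n ∧ Adm ((0 : A) ::ₘ a ::ₘ t)) :
    symb (a ::ₘ a ::ₘ t) h = symb (0 ::ₘ a ::ₘ t) h0 := by
  rw [← sub_eq_zero, symb_eq_mk, symb_eq_mk, ← map_sub]
  exact mk_eq_zero_of_mem (Or.inr ⟨a, t, h, h0, rfl⟩)

open scoped Classical in
/-- `[s]` for an arbitrary multiset, `0` unless `s` is an admissible symbol. Since blow-ups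
preserve admissibility, the relations then hold without side conditions. -/
noncomputable def cls (s : Multiset A) : B A n :=
  if h : Multiset.card s = n ∧ Adm s then symb s h else 0

theorem symb_eq_cls {s : Multiset A} (h : Multiset.card s = n ∧ Adm s) : symb s h = cls s :=
  (dif_pos h).symm

theorem cls_of_not {s : Multiset A} (h : ¬ (Multiset.card s = n ∧ Adm s)) :
    (cls s : B A n) = 0 :=
  dif_neg h

theorem cls_blowup {a b : A} {t : Multiset A} (hab : a ≠ b) :
    (cls (a ::ₘ b ::ₘ t) : B A n) = cls (a ::ₘ (b - a) ::ₘ t) + cls ((a - b) ::ₘ b ::ₘ t) := by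
  have h1 : (Multiset.card (a ::ₘ (b - a) ::ₘ t) = n ∧ Adm (a ::ₘ (b - a) ::ₘ t)) ↔
      (Multiset.card (a ::ₘ b ::ₘ t) = n ∧ Adm (a ::ₘ b ::ₘ t)) := by
    simp only [Multiset.card_cons, adm_cons_cons_sub_left]
  have h2 : (Multiset.card ((a - b) ::ₘ b ::ₘ t) = n ∧ Adm ((a - b) ::ₘ b ::ₘ t)) ↔
      (Multiset.card (a ::ₘ b ::ₘ t) = n ∧ Adm (a ::ₘ b ::ₘ t)) := by
    simp only [Multiset.card_cons, adm_cons_sub_cons_right]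
  by_cases h : Multiset.card (a ::ₘ b ::ₘ t) = n ∧ Adm (a ::ₘ b ::ₘ t)
  · rw [← symb_eq_cls h, ← symb_eq_cls (h1.2 h), ← symb_eq_cls (h2.2 h)]
    exact symb_blowup hab _ _ _
  · rw [cls_of_not h, cls_of_not (h1.not.2 h), cls_of_not (h2.not.2 h), add_zero]

theorem cls_cons_self (a : A) (t : Multiset A) :
    (cls (a ::ₘ a ::ₘ t) : B A n) = cls (0 ::ₘ a ::ₘ t) := by
  have h0 : (Multiset.card ((0 : A) ::ₘ a ::ₘ t) = n ∧ Adm ((0 : A) ::ₘ a ::ₘ t)) ↔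
      (Multiset.card (a ::ₘ a ::ₘ t) = n ∧ Adm (a ::ₘ a ::ₘ t)) := by
    simp only [Multiset.card_cons, adm_zero_cons_iff]
  by_cases h : Multiset.card (a ::ₘ a ::ₘ t) = n ∧ Adm (a ::ₘ a ::ₘ t)
  · rw [← symb_eq_cls h, ← symb_eq_cls (h0.2 h)]
    exact symb_cons_self h _
  · rw [cls_of_not h, cls_of_not (h0.not.2 h)]

theorem cls_pair_blowup {a b c d : A} (hab : a ≠ b) (hc : b - a = c) (hd : a - b = d) :
    (cls {a, b} : B A n) = cls {a, c} + cls {d, b} := by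
  subst hc hd
  exact cls_blowup hab

variable {M : Type*} [AddCommGroup M]

def lift (f : Multiset A → M)
    (hblowup : ∀ a b t, a ≠ b → Multiset.card (a ::ₘ b ::ₘ t) = n →
      f (a ::ₘ b ::ₘ t) = f (a ::ₘ (b - a) ::ₘ t) + f ((a - b) ::ₘ b ::ₘ t))
    (hself : ∀ a t, Multiset.card (a ::ₘ a ::ₘ t) = n → f (a ::ₘ a ::ₘ t) = f (0 ::ₘ a ::ₘ t)) :
    B A n →+ M :=
  QuotientAddGroup.lift _ (FreeAbelianGroup.lift fun s : Symb A n => f s.1) <|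
    (AddSubgroup.closure_le _).2 <| by
      -- `blowupRels` applies `of` at the subtype underlying `Symb A n`, hence `erw`.
      rintro x (⟨a, b, t, h, -, -, hab, rfl⟩ | ⟨a, t, h, -, rfl⟩)
      · erw [SetLike.mem_coe, AddMonoidHom.mem_ker, map_sub, map_sub,
          FreeAbelianGroup.lift_apply_of, FreeAbelianGroup.lift_apply_of,
          FreeAbelianGroup.lift_apply_of, hblowup a b t hab h.1, sub_sub, sub_self]
      · erw [SetLike.mem_coe, AddMonoidHom.mem_ker, map_sub, FreeAbelianGroup.lift_apply_of,
          FreeAbelianGroup.lift_apply_of, hself a t h.1, sub_self]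

theorem lift_symb (f : Multiset A → M) hblowup hself (s : Multiset A)
    (h : Multiset.card s = n ∧ Adm s) : lift f hblowup hself (symb s h) = f s :=
  FreeAbelianGroup.lift_apply_of _ _

theorem hom_ext {f g : B A n →+ M} (h : ∀ s hs, f (symb s hs) = g (symb s hs)) : f = g :=
  QuotientAddGroup.addMonoidHom_ext _ <| FreeAbelianGroup.lift_ext _ _ fun s => h s.1 s.2

end B

namespace C4

theorem adm_iff {s : Multiset (ZMod 4)} : Adm s ↔ 1 ∈ s ∨ 3 ∈ s := by
  refine ⟨fun hadm => ?_, fun h => h.elim (fun h1 => admU h1 (v := 1) rfl)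
    (fun h3 => admU h3 (v := 3) rfl)⟩
  by_contra! h
  have hle : AddSubgroup.closure {x | x ∈ s} ≤ AddSubgroup.zmultiples 2 := by
    rw [AddSubgroup.closure_le]
    intro x hx
    obtain rfl | rfl : x = 0 ∨ x = 2 := by
      have := (by decide : ∀ x : ZMod 4, x ≠ 1 → x ≠ 3 → x = 0 ∨ x = 2)
      exact this x (ne_of_mem_of_not_mem hx h.1) (ne_of_mem_of_not_mem hx h.2)
    exacts [zero_mem _, AddSubgroup.mem_zmultiples 2]
  obtain ⟨k, hk⟩ :=
    AddSubgroup.mem_zmultiples_iff.1 (hle (hadm ▸ AddSubgroup.mem_top (1 : ZMod 4)))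
  rw [zsmul_eq_mul] at hk
  exact (by decide : ∀ c : ZMod 4, c * 2 ≠ 1) _ hk

local notation "⟦" a ", " b "⟧" => (B.cls ({a, b} : Multiset (ZMod 4)) : B (ZMod 4) 2)

theorem cls_one_three : ⟦1, 3⟧ = 0 := by
  have h := B.cls_pair_blowup (n := 2) (a := (0 : ZMod 4)) (b := 1) (c := 1) (d := 3)
    (by decide) (by decide) (by decide)
  rw [Multiset.pair_comm 3] at h
  exact add_eq_left.1 h.symm

theorem cls_two_three : ⟦2, 3⟧ = -⟦1, 2⟧ := by
  have h := B.cls_pair_blowup (n := 2) (a := (1 : ZMod 4)) (b := 3) (c := 2) (d := 2)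
    (by decide) (by decide) (by decide)
  rw [cls_one_three] at h
  exact eq_neg_of_add_eq_zero_right h.symm

theorem cls_one_one : ⟦1, 1⟧ = 2 • ⟦1, 2⟧ := by
  have h := B.cls_pair_blowup (n := 2) (a := (1 : ZMod 4)) (b := 2) (c := 1) (d := 3)
    (by decide) (by decide) (by decide)
  rw [Multiset.pair_comm 3, cls_two_three] at h
  rw [two_smul]
  exact (eq_add_neg_iff_add_eq.1 h).symm

theorem cls_zero_one : ⟦0, 1⟧ = 2 • ⟦1, 2⟧ :=
  (B.cls_cons_self 1 0).symm.trans cls_one_one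

theorem cls_three_three : ⟦3, 3⟧ = -(2 • ⟦1, 2⟧) := by
  have h := B.cls_pair_blowup (n := 2) (a := (2 : ZMod 4)) (b := 3) (c := 1) (d := 3)
    (by decide) (by decide) (by decide)
  rw [Multiset.pair_comm 2 1, cls_two_three] at h
  rw [two_smul, neg_add]
  exact eq_neg_add_of_add_eq h.symm

theorem cls_zero_three : ⟦0, 3⟧ = -(2 • ⟦1, 2⟧) :=
  (B.cls_cons_self 3 0).symm.trans cls_three_three

def weight (s : Multiset (ZMod 4)) : ℤ :=
  if s = {1, 2} then 1
  else if s = {1, 1} ∨ s = {0, 1} then 2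
  else if s = {2, 3} then -1
  else if s = {3, 3} ∨ s = {0, 3} then -2
  else 0

theorem weight_blowup (a b : ZMod 4) (t : Multiset (ZMod 4)) (hab : a ≠ b)
    (ht : Multiset.card (a ::ₘ b ::ₘ t) = 2) :
    weight (a ::ₘ b ::ₘ t) = weight (a ::ₘ (b - a) ::ₘ t) + weight ((a - b) ::ₘ b ::ₘ t) := by
  obtain rfl : t = 0 := by simpa using ht
  revert a b
  decide

theorem weight_cons_self (a : ZMod 4) (t : Multiset (ZMod 4))
    (ht : Multiset.card (a ::ₘ a ::ₘ t) = 2) :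
    weight (a ::ₘ a ::ₘ t) = weight (0 ::ₘ a ::ₘ t) := by
  obtain rfl : t = 0 := by simpa using ht
  revert a
  decide

theorem cls_eq_weight_smul (a b : ZMod 4) : ⟦a, b⟧ = weight {a, b} • ⟦1, 2⟧ := by
  by_cases h : Adm ({a, b} : Multiset (ZMod 4))
  · rw [adm_iff] at h
    have zmod_four_cases : ∀ x : ZMod 4, x = 0 ∨ x = 1 ∨ x = 2 ∨ x = 3 := by decide
    rcases zmod_four_cases a with rfl | rfl | rfl | rfl <;>
      rcases zmod_four_cases b with rfl | rfl | rfl | rfl <;>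
      simp +decide only [weight, if_true, if_false, one_smul, zero_smul, neg_smul,
        ofNat_smul_eq_nsmul, Multiset.pair_comm (1 : ZMod 4) 0, Multiset.pair_comm (2 : ZMod 4) 1,
        Multiset.pair_comm (3 : ZMod 4) 0, Multiset.pair_comm (3 : ZMod 4) 1,
        Multiset.pair_comm (3 : ZMod 4) 2, cls_one_three, cls_two_three, cls_one_one,
        cls_zero_one, cls_three_three, cls_zero_three] at h ⊢
  · have hw : weight {a, b} = 0 := by
      rw [adm_iff] at h
      revert a b
      decide
    rw [B.cls_of_not fun h' => h h'.2, hw, zero_smul]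

noncomputable def weightHom : B (ZMod 4) 2 →+ ℤ :=
  B.lift weight weight_blowup weight_cons_self

theorem weightHom_cls_one_two : weightHom ⟦1, 2⟧ = 1 := by
  rw [← B.symb_eq_cls (n := 2) (s := {1, 2}) ⟨rfl, adm_iff.2 (by decide)⟩, weightHom,
    B.lift_symb]
  decide

noncomputable def equivInt : B (ZMod 4) 2 ≃+ ℤ :=
  weightHom.toAddEquiv (zmultiplesHom _ ⟦1, 2⟧)
    (B.hom_ext fun s hs => by
      obtain ⟨a, b, rfl⟩ := Multiset.card_eq_two.1 hs.1
      rw [AddMonoidHom.comp_apply, weightHom, B.lift_symb, zmultiplesHom_apply,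
        AddMonoidHom.id_apply, B.symb_eq_cls]
      exact (cls_eq_weight_smul a b).symm)
    (AddMonoidHom.ext_int <| by
      rw [AddMonoidHom.comp_apply, zmultiplesHom_apply, one_smul, weightHom_cls_one_two,
        AddMonoidHom.id_apply])

end C4

/-- `B₂(C₄) ≅ ℤ`, generated by `β₁ = [1,2]`, with
`[1,1] = [0,1] = 2β₁`, `[1,3] = 0`, `[2,3] = -β₁` and `[3,3] = [0,3] = -2β₁`. -/
theorem B2_C4_int :
    (∃ φ : B (ZMod 4) 2 ≃+ ℤ, φ c4_12 = 1) ∧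
    c4_11 = 2 • c4_12 ∧ c4_01 = 2 • c4_12 ∧ c4_13 = 0 ∧
    c4_23 = -c4_12 ∧ c4_33 = -(2 • c4_12) ∧ c4_03 = -(2 • c4_12) := by
  simp only [c4_12, c4_11, c4_01, c4_13, c4_23, c4_33, c4_03, B.symb_eq_cls]
  exact ⟨⟨C4.equivInt, C4.weightHom_cls_one_two⟩, C4.cls_one_one, C4.cls_zero_one,
    C4.cls_one_three, C4.cls_two_three, C4.cls_three_three, C4.cls_zero_three⟩
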